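/- arXiv:2207.04362 — 6 statements merged into one kernel-verified Lean document; each statement's English description precedes it below -/
import Mathlib

section
/- If σ₁ and σ₂ are finite firing sequences of a net N with σ₁ adjacent to σ₂ (i.e., σ₁ = αtuβ, σ₂ = αutβ, and the step {t,u} is enabled after firing α), and σ₂ is a prefix of a (possibly infinite) firing sequence σ₃, then there exists a firing sequence σ' of N with σ₁ ≤ σ' and σ' adjacent to σ₃; moreover, if σ₃ is finite then so is σ'. -/
open Relation

/-- A place/transition net with place type `S` and transition type `T`. -/
structure Net (S T : Type) where
  /-- arc weight from place `s` to transition `t` -/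
  pre : T → S → ℕ
  /-- arc weight from transition `t` to place `s` -/
  post : T → S → ℕ
  /-- the initial marking -/
  M0 : S → ℕ
  pre_finite : ∀ t, {s | pre t s > 0}.Finite
  pre_nonempty : ∀ t, ∃ s, pre t s > 0
  post_finite : ∀ t, {s | post t s > 0}.Finite

namespace Net

variable {S T : Type} (N : Net S T)

/-- the singleton step `{t}` is enabled at marking `M` -/
def Enabled (t : T) (M : S → ℕ) : Prop := ∀ s, N.pre t s ≤ M s

/-- the two-element multiset step `{t,u}` is enabled at marking `M` -/
def Enabled2 (t u : T) (M : S → ℕ) : Prop := ∀ s, N.pre t s + N.pre u s ≤ M s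

/-- firing transition `t` leads from marking `M` to marking `M'` -/
def Fires (t : T) (M M' : S → ℕ) : Prop :=
  N.Enabled t M ∧ M' = fun s => M s - N.pre t s + N.post t s

/-- firing the finite transition sequence `σ` leads from `M` to `M'` -/
inductive FiresList : (S → ℕ) → List T → (S → ℕ) → Prop
  | nil (M : S → ℕ) : FiresList M [] M
  | cons {M M₁ M' : S → ℕ} {t : T} {σ : List T} :
      N.Fires t M M₁ → FiresList M₁ σ M' → FiresList M (t :: σ) M'

/-- a marking is reachable -/
def Reachable (M : S → ℕ) : Prop := ∃ σ : List T, N.FiresList N.M0 σ M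

/-- `σ` is a finite firing sequence of `N` -/
def FS (σ : List T) : Prop := ∃ M, N.FiresList N.M0 σ M

/-- `σ` is a (possibly infinite) firing sequence of `N` -/
def FSInf (σ : Stream'.Seq T) : Prop := ∀ n, N.FS (σ.take n)

/-- adjacency `≡₀` on finite firing sequences -/
def Adj (σ ρ : List T) : Prop :=
  ∃ (α β : List T) (t u : T) (M : S → ℕ),
    σ = α ++ t :: u :: β ∧ ρ = α ++ u :: t :: β ∧
    N.FiresList N.M0 α M ∧ N.Enabled2 t u M ∧ N.FS σ ∧ N.FS ρ

/-- adjacency `≡₀` on possibly infinite firing sequences -/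
def AdjSeq (σ ρ : Stream'.Seq T) : Prop :=
  ∃ (α : List T) (β : Stream'.Seq T) (t u : T) (M : S → ℕ),
    σ = (Stream'.Seq.ofList (α ++ [t, u])).append β ∧
    ρ = (Stream'.Seq.ofList (α ++ [u, t])).append β ∧
    N.FiresList N.M0 α M ∧ N.Enabled2 t u M ∧ N.FSInf σ ∧ N.FSInf ρ

end Net

/-- the finite sequence `l` is a prefix of the possibly infinite sequence `s` -/
def ListPrefixSeq {T : Type} (l : List T) (s : Stream'.Seq T) : Prop :=
  s.take l.length = l

namespace Net

variable {S T : Type} (N : Net S T)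

/-- the preorder `⊑₀^∞` on possibly infinite firing sequences -/
def Sqsubseteq0 (σ ρ : Stream'.Seq T) : Prop :=
  ∀ σ'' : List T, N.FS σ'' → ListPrefixSeq σ'' σ →
    ∃ σ' ρ' : List T, N.FS σ' ∧ N.FS ρ' ∧ σ'' <+: σ' ∧
      ReflTransGen N.Adj σ' ρ' ∧ ListPrefixSeq ρ' ρ

end Net

/-! Write `σ₃ = σ₂ ρ` and take `σ' = σ₁ ρ`. Since `{t,u}` is enabled after `α`, both `t u` and
`u t` can fire there and lead to the same marking, so every firing continuation of `α u t` is
also one of `α t u`; hence `σ'` is a firing sequence, and it is adjacent to `σ₃` with the same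
tail `β ρ`. -/

namespace Stream'.Seq

variable {α : Type*}

theorem take_ofList_append (l : List α) (s : Seq α) (n : ℕ) :
    (append (ofList l) s).take n = l.take n ++ s.take (n - l.length) := by
  induction l generalizing n with
  | nil => simp [ofList_nil, nil_append]
  | cons a l ih => cases n <;> simp [ofList_cons, cons_append, ih]

theorem ofList_take_append_drop (s : Seq α) (n : ℕ) :
    append (ofList (s.take n)) (s.drop n) = s := by
  induction n generalizing s with
  | zero => simp [ofList_nil]
  | succ n ih =>
    cases s with
    | nil => simp [ofList_nil]
    | cons a s => simp [ofList_cons, cons_append, ih]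

theorem terminates_ofList_append_iff (l : List α) (s : Seq α) :
    (append (ofList l) s).Terminates ↔ s.Terminates := by
  induction l with
  | nil => simp [ofList_nil, nil_append]
  | cons a l ih => simp [ofList_cons, cons_append, ih]

end Stream'.Seq

open Stream'.Seq in
theorem listPrefixSeq_ofList_append {α : Type} (l : List α) (s : Stream'.Seq α) :
    ListPrefixSeq l (append (ofList l) s) := by
  simp [ListPrefixSeq, take_ofList_append]

open Stream'.Seq in
theorem ListPrefixSeq.exists_eq_ofList_append {α : Type} {l : List α} {s : Stream'.Seq α}
    (h : ListPrefixSeq l s) : ∃ r, s = append (ofList l) r :=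
  ⟨s.drop l.length, (ofList_take_append_drop s l.length).symm.trans (by rw [h])⟩

namespace Net

variable {S T : Type} {N : Net S T}

theorem firesList_append {M M' : S → ℕ} {l₁ l₂ : List T} :
    N.FiresList M (l₁ ++ l₂) M' ↔ ∃ M₁, N.FiresList M l₁ M₁ ∧ N.FiresList M₁ l₂ M' := by
  induction l₁ generalizing M with
  | nil =>
    refine ⟨fun h => ⟨M, .nil M, h⟩, ?_⟩
    rintro ⟨M₁, ⟨⟩, h⟩
    exact h
  | cons t l₁ ih =>
    constructor
    · rintro (_ | ⟨hf, hrest⟩)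
      obtain ⟨M₁, h₁, h₂⟩ := ih.1 hrest
      exact ⟨M₁, .cons hf h₁, h₂⟩
    · rintro ⟨M₁, (_ | ⟨hf, h₁⟩), h₂⟩
      exact .cons hf (ih.2 ⟨M₁, h₁, h₂⟩)

theorem FiresList.unique {M M₁ M₂ : S → ℕ} {l : List T}
    (h₁ : N.FiresList M l M₁) (h₂ : N.FiresList M l M₂) : M₁ = M₂ := by
  induction l generalizing M with
  | nil => cases h₁; cases h₂; rfl
  | cons t l ih =>
    obtain _ | ⟨⟨_, rfl⟩, h₁⟩ := h₁
    obtain _ | ⟨⟨_, rfl⟩, h₂⟩ := h₂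
    exact ih h₁ h₂

theorem FS.of_prefix {σ δ : List T} (h : N.FS σ) (hδ : δ <+: σ) : N.FS δ := by
  obtain ⟨γ, rfl⟩ := hδ
  obtain ⟨M, h⟩ := h
  obtain ⟨M₁, h₁, -⟩ := firesList_append.1 h
  exact ⟨M₁, h₁⟩

theorem firesList_swap {M M' : S → ℕ} {t u : T} {δ : List T}
    (he : N.Enabled2 t u M) (h : N.FiresList M (u :: t :: δ) M') :
    N.FiresList M (t :: u :: δ) M' := by
  obtain _ | ⟨⟨-, rfl⟩, _ | ⟨⟨-, rfl⟩, hδ⟩⟩ := h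
  refine .cons ⟨fun s => by have := he s; omega, rfl⟩
    (.cons ⟨fun s => by have := he s; dsimp only; omega, rfl⟩ ?_)
  convert hδ using 2 with s
  have := he s
  dsimp only
  omega

theorem fs_swap {α δ : List T} {t u : T} {M : S → ℕ}
    (hα : N.FiresList N.M0 α M) (he : N.Enabled2 t u M)
    (h : N.FS (α ++ u :: t :: δ)) : N.FS (α ++ t :: u :: δ) := by
  obtain ⟨M', h⟩ := h
  obtain ⟨M₁, h₁, h₂⟩ := firesList_append.1 h
  obtain rfl := h₁.unique hα
  exact ⟨M', firesList_append.2 ⟨M₁, h₁, firesList_swap he h₂⟩⟩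

section Tail

open Stream'.Seq

theorem fsInf_ofList_append_iff {l : List T} {s : Stream'.Seq T} :
    N.FSInf (append (ofList l) s) ↔ ∀ m, N.FS (l ++ s.take m) := by
  refine ⟨fun h m => ?_, fun h n => ?_⟩
  · simpa [take_ofList_append, List.take_of_length_le] using h (l.length + m)
  · rw [take_ofList_append]
    refine (h (n - l.length)).of_prefix ?_
    rcases le_or_gt l.length n with hn | hn
    · rw [List.take_of_length_le hn]
    · rw [Nat.sub_eq_zero_of_le hn.le, take_zero, List.append_nil, List.append_nil]
      exact List.take_prefix n l

theorem fsInf_swap {α β : List T} {t u : T} {M : S → ℕ} {ρ : Stream'.Seq T}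
    (hα : N.FiresList N.M0 α M) (he : N.Enabled2 t u M)
    (h : N.FSInf (append (ofList (α ++ u :: t :: β)) ρ)) :
    N.FSInf (append (ofList (α ++ t :: u :: β)) ρ) :=
  fsInf_ofList_append_iff.2 fun m => by
    simpa using fs_swap hα he (by simpa using fsInf_ofList_append_iff.1 h m)

theorem adjSeq_ofList_append {α β : List T} {t u : T} {M : S → ℕ} {ρ : Stream'.Seq T}
    (hα : N.FiresList N.M0 α M) (he : N.Enabled2 t u M)
    (h₁ : N.FSInf (append (ofList (α ++ t :: u :: β)) ρ))
    (h₂ : N.FSInf (append (ofList (α ++ u :: t :: β)) ρ)) :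
    N.AdjSeq (append (ofList (α ++ t :: u :: β)) ρ) (append (ofList (α ++ u :: t :: β)) ρ) := by
  have reassoc (γ : List T) : append (ofList (α ++ γ ++ β)) ρ =
      append (ofList (α ++ γ)) (append (ofList β) ρ) := by
    rw [ofList_append, append_assoc]
  exact ⟨α, append (ofList β) ρ, t, u, M, by rw [← reassoc]; simp, by rw [← reassoc]; simp,
    hα, he, h₁, h₂⟩

end Tail

end Net

theorem swap_prefix_fs_one_step {S T : Type} (N : Net S T)
    (σ₁ σ₂ : List T) (σ₃ : Stream'.Seq T)
    (h12 : N.Adj σ₁ σ₂) (h3 : N.FSInf σ₃) (h23 : ListPrefixSeq σ₂ σ₃) :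
    ∃ σ' : Stream'.Seq T, N.FSInf σ' ∧ ListPrefixSeq σ₁ σ' ∧ N.AdjSeq σ' σ₃ ∧
      (σ₃.Terminates → σ'.Terminates) := by
  obtain ⟨α, β, t, u, M, rfl, rfl, hα, he, -, -⟩ := h12
  obtain ⟨ρ, rfl⟩ := h23.exists_eq_ofList_append
  have hσ' := Net.fsInf_swap hα he h3
  refine ⟨_, hσ', listPrefixSeq_ofList_append _ _, Net.adjSeq_ofList_append hα he hσ' h3, ?_⟩
  simp only [Stream'.Seq.terminates_ofList_append_iff, imp_self]
end

section
/- For a finite firing sequence σ'' and a possibly infinite firing sequence ρ of a net N, there exists a firing sequence ρ† with σ'' ≤ ρ† ≡₀* ρ if and only if there exist finite firing sequences σ', ρ' with σ'' ≤ σ' ≡₀* ρ' ≤ ρ. -/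
open Relation

section Auxiliary

open Stream'

namespace Stream'.Seq

variable {α : Type*}

theorem fsw_take_succ_cons (a : α) (s : Seq α) (n : ℕ) :
    (cons a s).take (n+1) = a :: s.take n := by
  simp [take, destruct_cons]

theorem fsw_take_ofList_append (l : List α) (s : Seq α) (n : ℕ) :
    ((ofList l).append s).take n = l.take n ++ s.take (n - l.length) := by
  induction l generalizing n with
  | nil => simp [ofList_nil, nil_append]
  | cons a l ih =>
    cases n with
    | zero => simp [take]
    | succ n => simp [ofList_cons, cons_append, fsw_take_succ_cons, ih]

theorem fsw_take_take (s : Seq α) (m n : ℕ) :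
    (s.take n).take m = s.take (min m n) := by
  apply List.ext_getElem?
  intro k
  rw [List.getElem?_take]
  by_cases hk : k < m
  · by_cases hkn : k < n
    · simp [hk, getElem?_take, hkn, lt_min hk hkn]
    · rw [getElem?_take, getElem?_take]
      simp [hkn, Nat.lt_min, hk]
  · rw [getElem?_take]
    simp only [hk, if_false]
    have : ¬ k < min m n := by omega
    simp [this]

theorem fsw_length_take_le (s : Seq α) (n : ℕ) : (s.take n).length ≤ n := by
  induction n generalizing s with
  | zero => simp [take]
  | succ n ih =>
    rw [take]
    cases h : destruct s with
    | none => simp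
    | some p => obtain ⟨x, r⟩ := p; simpa using ih r

end Stream'.Seq

open Stream' in
theorem fsw_take_prefixSeq {T : Type} (s : Seq T) (n : ℕ) :
    ListPrefixSeq (s.take n) s := by
  have h := Seq.fsw_take_take s ((s.take n).length) n
  rw [min_eq_left (Seq.fsw_length_take_le s n)] at h
  unfold ListPrefixSeq
  rw [← h, List.take_length]

open Stream' in
theorem fsw_prefix_trans_seq {T : Type} {l l' : List T} {s : Seq T}
    (h1 : l <+: l') (h2 : ListPrefixSeq l' s) : ListPrefixSeq l s := by
  obtain ⟨r, rfl⟩ := h1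
  unfold ListPrefixSeq at *
  have h := Seq.fsw_take_take s l.length (l ++ r).length
  rw [min_eq_left (by simp)] at h
  rw [← h, h2, List.take_left]

open Stream' in
theorem fsw_prefix_take_of_prefixSeq {T : Type} {l : List T} {s : Seq T} {n : ℕ}
    (h : ListPrefixSeq l s) (hn : l.length ≤ n) : l <+: s.take n := by
  have h' : (s.take n).take l.length = l := by
    rw [Seq.fsw_take_take, min_eq_left hn]; exact h
  exact h' ▸ List.take_prefix _ _

open Stream' in
theorem fsw_eq_append_of_prefixSeq {T : Type} {l : List T} {s : Seq T}
    (h : ListPrefixSeq l s) : s = (Seq.ofList l).append (s.drop l.length) := by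
  induction l generalizing s with
  | nil => simp [Seq.ofList_nil, Seq.nil_append, Seq.drop]
  | cons a l ih =>
    unfold ListPrefixSeq at h
    simp only [List.length_cons] at h
    rw [Seq.take] at h
    cases hd : Seq.destruct s with
    | none => rw [hd] at h; simp at h
    | some p =>
      obtain ⟨x, r⟩ := p
      rw [hd] at h
      simp only [List.cons.injEq] at h
      obtain ⟨rfl, hr⟩ := h
      have hs : s = Seq.cons x r := Seq.destruct_eq_cons hd
      subst hs
      have hdrop : (Seq.cons x r).drop (l.length + 1) = r.drop l.length := by
        rw [← Seq.dropn_tail, Seq.tail_cons]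
      rw [Seq.ofList_cons, Seq.cons_append, List.length_cons, hdrop]
      exact congrArg (Seq.cons x) (ih hr)

open Stream' in
theorem fsw_prefixSeq_ofList_append {T : Type} (l : List T) (s : Seq T) :
    ListPrefixSeq l ((Seq.ofList l).append s) := by
  unfold ListPrefixSeq
  rw [Seq.fsw_take_ofList_append]
  simp [Seq.take]

namespace Net

variable {S T : Type} (N : Net S T)

theorem fsw_firesList_det : ∀ {l : List T} {M M₁ M₂ : S → ℕ},
    N.FiresList M l M₁ → N.FiresList M l M₂ → M₁ = M₂ := by
  intro l
  induction l with
  | nil => intro M M₁ M₂ h1 h2; cases h1; cases h2; rfl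
  | cons t l ih =>
    intro M M₁ M₂ h1 h2
    cases h1 with
    | cons hf1 hl1 =>
      cases h2 with
      | cons hf2 hl2 =>
        have he : _ = _ := hf1.2.trans hf2.2.symm
        exact ih (he ▸ hl1) hl2

theorem fsw_firesList_append {l l' : List T} {M M' : S → ℕ} :
    N.FiresList M (l ++ l') M' ↔ ∃ M₁, N.FiresList M l M₁ ∧ N.FiresList M₁ l' M' := by
  induction l generalizing M with
  | nil =>
    simp only [List.nil_append]
    constructor
    · intro h; exact ⟨M, .nil M, h⟩
    · rintro ⟨M₁, h1, h2⟩; cases h1; exact h2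
  | cons t l ih =>
    constructor
    · intro h
      cases h with
      | cons hf hl =>
        obtain ⟨M₁, ha, hb⟩ := ih.mp hl
        exact ⟨M₁, .cons hf ha, hb⟩
    · rintro ⟨M₁, h1, h2⟩
      cases h1 with
      | cons hf hl => exact .cons hf (ih.mpr ⟨M₁, hl, h2⟩)

theorem fsw_FS_prefix {l l' : List T} (h : l <+: l') (hFS : N.FS l') : N.FS l := by
  obtain ⟨r, rfl⟩ := h
  obtain ⟨M', hM'⟩ := hFS
  obtain ⟨M₁, h1, _⟩ := N.fsw_firesList_append.mp hM'
  exact ⟨M₁, h1⟩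

theorem fsw_fires_swap {t u : T} {M M₁ M₂ : S → ℕ}
    (hen : N.Enabled2 t u M) (h1 : N.Fires u M M₁) (h2 : N.Fires t M₁ M₂) :
    ∃ M₁', N.Fires t M M₁' ∧ N.Fires u M₁' M₂ := by
  refine ⟨fun s => M s - N.pre t s + N.post t s, ⟨fun s => ?_, rfl⟩, ⟨fun s => ?_, ?_⟩⟩
  · have := hen s; omega
  · show N.pre u s ≤ M s - N.pre t s + N.post t s
    have := hen s; omega
  · funext s
    show M₂ s = (M s - N.pre t s + N.post t s) - N.pre u s + N.post u s
    have hh := hen s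
    have e1 : M₁ s = M s - N.pre u s + N.post u s := by rw [h1.2]
    have e2 : M₂ s = M₁ s - N.pre t s + N.post t s := by rw [h2.2]
    omega

theorem fsw_swapFS {α δ : List T} {t u : T} {M M' : S → ℕ}
    (hα : N.FiresList N.M0 α M) (hen : N.Enabled2 t u M)
    (h : N.FiresList N.M0 (α ++ u :: t :: δ) M') :
    N.FiresList N.M0 (α ++ t :: u :: δ) M' := by
  obtain ⟨M₁, ha, hb⟩ := N.fsw_firesList_append.mp h
  have hMe : M₁ = M := N.fsw_firesList_det ha hα
  subst hMe
  cases hb with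
  | cons hfu hrest =>
    cases hrest with
    | cons hft hδ =>
      obtain ⟨M₁', hft', hfu'⟩ := N.fsw_fires_swap hen hfu hft
      exact N.fsw_firesList_append.mpr ⟨M₁, hα, .cons hft' (.cons hfu' hδ)⟩

theorem fsw_FS_swap_append {α δ : List T} {t u : T} {M : S → ℕ}
    (hα : N.FiresList N.M0 α M) (hen : N.Enabled2 t u M)
    (h : N.FS (α ++ u :: t :: δ)) : N.FS (α ++ t :: u :: δ) := by
  obtain ⟨M', hM'⟩ := h
  exact ⟨M', N.fsw_swapFS hα hen hM'⟩

end Net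

open Stream' in
theorem fsw_fwd {S T : Type} (N : Net S T) (ρ : Seq T) :
    ∀ ρd, Relation.ReflTransGen N.AdjSeq ρd ρ →
    ∀ σ'' : List T, N.FS σ'' → ListPrefixSeq σ'' ρd →
    ∃ σ' ρ' : List T, N.FS σ' ∧ N.FS ρ' ∧ σ'' <+: σ' ∧
      Relation.ReflTransGen N.Adj σ' ρ' ∧ ListPrefixSeq ρ' ρ := by
  intro ρd h
  induction h using Relation.ReflTransGen.head_induction_on with
  | refl =>
    intro σ'' h1 h2
    exact ⟨σ'', σ'', h1, h1, List.prefix_refl _, .refl, h2⟩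
  | head hadj hrtg ih =>
    rename_i ρd ρ₁
    intro σ'' hFS hpre
    obtain ⟨α, β, t, u, M, hσeq, hρeq, hα, hen, hFSd, hFS1⟩ := hadj
    set n := max σ''.length (α.length + 2) with hn
    have hn1 : σ''.length ≤ n := le_max_left _ _
    have hn2 : α.length + 2 ≤ n := le_max_right _ _
    set β' := β.take (n - (α.length + 2)) with hβ'
    have hlen : (α ++ [t, u]).length = α.length + 2 := by simp
    have hlen' : (α ++ [u, t]).length = α.length + 2 := by simp
    have hσ0 : ρd.take n = α ++ t :: u :: β' := by
      rw [hσeq, Seq.fsw_take_ofList_append, hlen,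
        List.take_of_length_le (by omega), List.append_assoc, hβ']
      rfl
    have hτ : ρ₁.take n = α ++ u :: t :: β' := by
      rw [hρeq, Seq.fsw_take_ofList_append, hlen',
        List.take_of_length_le (by omega), List.append_assoc, hβ']
      rfl
    obtain ⟨σ₂, ρ', h2FS, hρ'FS, hτpre, hchain, hρ'ρ⟩ :=
      ih (ρ₁.take n) (hFS1 n) (fsw_take_prefixSeq ρ₁ n)
    obtain ⟨γ, hγ⟩ := hτpre
    have hσ₂ : σ₂ = α ++ u :: t :: (β' ++ γ) := by
      rw [← hγ, hτ, List.append_assoc]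
      rfl
    have hFSσ' : N.FS (α ++ t :: u :: (β' ++ γ)) :=
      N.fsw_FS_swap_append hα hen (by rw [← hσ₂]; exact h2FS)
    have hσ'eq : ρd.take n ++ γ = α ++ t :: u :: (β' ++ γ) := by
      rw [hσ0, List.append_assoc]
      rfl
    have hFSσ'2 : N.FS (ρd.take n ++ γ) := by rw [hσ'eq]; exact hFSσ'
    refine ⟨ρd.take n ++ γ, ρ', hFSσ'2, hρ'FS, ?_, ?_, hρ'ρ⟩
    · exact (fsw_prefix_take_of_prefixSeq hpre hn1).trans (List.prefix_append _ _)
    · refine Relation.ReflTransGen.head ?_ hchain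
      exact ⟨α, β' ++ γ, t, u, M, hσ'eq, hσ₂, hα, hen, hFSσ'2, h2FS⟩

open Stream' in
theorem fsw_lift {S T : Type} (N : Net S T) {l m : List T} {s : Seq T}
    (hadj : N.Adj l m) (hFSs : N.FSInf s) (hpre : ListPrefixSeq m s) :
    ∃ s', N.FSInf s' ∧ ListPrefixSeq l s' ∧ N.AdjSeq s' s := by
  obtain ⟨α, β0, t, u, M, hl, hm, hα, hen, hFSl, hFSm⟩ := hadj
  have hdecomp := fsw_eq_append_of_prefixSeq hpre
  set rest := s.drop m.length with hrest
  have hlen : l.length = m.length := by rw [hl, hm]; simp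
  have hFSs' : N.FSInf ((Seq.ofList l).append rest) := by
    intro k
    rw [Seq.fsw_take_ofList_append]
    rcases le_or_gt k l.length with hk | hk
    · have h0 : k - l.length = 0 := by omega
      rw [h0]
      simpa [Seq.take] using N.fsw_FS_prefix (List.take_prefix k l) hFSl
    · rw [List.take_of_length_le (by omega)]
      have hsk : s.take k = m ++ rest.take (k - m.length) := by
        conv_lhs => rw [hdecomp]
        rw [Seq.fsw_take_ofList_append, List.take_of_length_le (by omega)]
      have hFSk := hFSs k
      rw [hsk, ← hlen] at hFSk
      generalize rest.take (k - l.length) = δ at hFSk ⊢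
      rw [hm, List.append_assoc] at hFSk
      rw [hl, List.append_assoc]
      simp only [List.cons_append] at hFSk ⊢
      exact N.fsw_FS_swap_append hα hen hFSk
  refine ⟨(Seq.ofList l).append rest, hFSs', fsw_prefixSeq_ofList_append l rest,
    α, (Seq.ofList β0).append rest, t, u, M, ?_, ?_, hα, hen, hFSs', hFSs⟩
  · rw [hl, show α ++ t :: u :: β0 = (α ++ [t, u]) ++ β0 by simp,
      Seq.ofList_append, Seq.append_assoc]
  · conv_lhs => rw [hdecomp]
    rw [hm, show α ++ u :: t :: β0 = (α ++ [u, t]) ++ β0 by simp,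
      Seq.ofList_append, Seq.append_assoc]

open Stream' in
theorem fsw_bwd {S T : Type} (N : Net S T) {l m : List T}
    (h : Relation.ReflTransGen N.Adj l m) :
    ∀ s : Seq T, N.FSInf s → ListPrefixSeq m s →
    ∃ s', N.FSInf s' ∧ ListPrefixSeq l s' ∧ Relation.ReflTransGen N.AdjSeq s' s := by
  induction h using Relation.ReflTransGen.head_induction_on with
  | refl => intro s h1 h2; exact ⟨s, h1, h2, .refl⟩
  | head hadj hrtg ih =>
    intro s h1 h2
    obtain ⟨s₁, hs₁FS, hs₁pre, hs₁chain⟩ := ih s h1 h2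
    obtain ⟨s₂, hs₂FS, hs₂pre, hs₂adj⟩ := fsw_lift N hadj hs₁FS hs₁pre
    exact ⟨s₂, hs₂FS, hs₂pre, .head hs₂adj hs₁chain⟩

end Auxiliary


theorem finite_swap {S T : Type} (N : Net S T)
    (σ'' : List T) (ρ : Stream'.Seq T) (h'' : N.FS σ'') (hρ : N.FSInf ρ) :
    (∃ ρd : Stream'.Seq T, N.FSInf ρd ∧ ListPrefixSeq σ'' ρd ∧
        Relation.ReflTransGen N.AdjSeq ρd ρ) ↔
    (∃ σ' ρ' : List T, N.FS σ' ∧ N.FS ρ' ∧ σ'' <+: σ' ∧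
        Relation.ReflTransGen N.Adj σ' ρ' ∧ ListPrefixSeq ρ' ρ) := by
  constructor
  · rintro ⟨ρd, _, h2, h3⟩
    exact fsw_fwd N ρ ρd h3 σ'' h'' h2
  · rintro ⟨σ', ρ', hσ'FS, hρ'FS, hpre, hchain, hρ'ρ⟩
    obtain ⟨s', ha, hb, hc⟩ := fsw_bwd N hchain ρ hρ hρ'ρ
    exact ⟨s', ha, fsw_prefix_trans_seq hpre hb, hc⟩
end

section
/- In a structural conflict net, a net is semantically conflict-free if and only if it is binary-conflict-free. -/
open Relation

/-- the multiset of preplaces of a step `G`, counted at place `s` -/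
def Net.preMS {S T : Type} (N : Net S T) (G : Multiset T) (s : S) : ℕ :=
  (G.map (fun t => N.pre t s)).sum

/-- the step `G` is enabled at marking `M` -/
def Net.EnabledMS {S T : Type} (N : Net S T) (G : Multiset T) (M : S → ℕ) : Prop :=
  ∀ s, N.preMS G s ≤ M s

/-- the finite nonempty multiset `G` is in (semantic) conflict at `M` -/
def Net.InConflict {S T : Type} (N : Net S T) (G : Multiset T) (M : S → ℕ) : Prop :=
  letI := Classical.decEq T
  G ≠ 0 ∧ ¬ N.EnabledMS G M ∧
    ∀ t ∈ G, N.EnabledMS (Multiset.replicate (G.count t) t) M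

/-- `N` is (semantically) conflict-free -/
def Net.ConflictFree {S T : Type} (N : Net S T) : Prop :=
  ∀ M, N.Reachable M → ∀ G : Multiset T, ¬ N.InConflict G M

/-- `N` is binary-conflict-free -/
def Net.BinaryConflictFreeMS {S T : Type} (N : Net S T) : Prop :=
  ∀ M, N.Reachable M → ∀ G : Multiset T, Multiset.card G = 2 → ¬ N.InConflict G M

/-- `N` is a structural conflict net: transitions of a concurrently
enabled step never share a preplace -/
def Net.StructuralConflictNet {S T : Type} (N : Net S T) : Prop :=
  ∀ M, N.Reachable M → ∀ t u : T, N.EnabledMS {t, u} M →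
    ∀ s, N.pre t s = 0 ∨ N.pre u s = 0

theorem scn_conflictfree_iff_binary {S T : Type} (N : Net S T)
    (hN : N.StructuralConflictNet) :
    N.ConflictFree ↔ N.BinaryConflictFreeMS := by
  classical
  constructor
  · intro h M hM G _
    exact h M hM G
  · intro hB M hM G hG
    obtain ⟨hne, hnen, hrest⟩ := hG
    -- each transition in G is singly enabled with its multiplicity
    have hrep : ∀ v ∈ G, ∀ s', G.count v * N.pre v s' ≤ M s' := by
      intro v hv s'
      have h := hrest v hv s'
      simpa [Net.preMS, Multiset.map_replicate, Multiset.sum_replicate] using h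
    have hsingle : ∀ v ∈ G, ∀ s', N.pre v s' ≤ M s' := by
      intro v hv s'
      calc N.pre v s' ≤ G.count v * N.pre v s' :=
            Nat.le_mul_of_pos_left _ (Multiset.count_pos.mpr hv)
        _ ≤ M s' := hrep v hv s'
    have hpair : ∀ t ∈ G, ∀ u ∈ G, t ≠ u → ∀ s', N.pre t s' = 0 ∨ N.pre u s' = 0 := by
      intro t ht u hu htu s'
      have hen2 : N.EnabledMS {t, u} M := by
        by_contra hno
        apply hB M hM {t, u} (by simp)
        refine ⟨by simp, hno, ?_⟩
        intro v hv s''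
        have hv' : v = t ∨ v = u := by simpa using hv
        have hc : Multiset.count v ({t, u} : Multiset T) = 1 := by
          rcases hv' with rfl | rfl <;>
            simp [Multiset.count_cons, Multiset.count_singleton, htu, htu.symm]
        rw [hc]
        simp only [Net.preMS, Multiset.map_replicate, Multiset.sum_replicate,
          Multiset.replicate_one]
        rcases hv' with rfl | rfl
        · simpa using hsingle v ht s''
        · simpa using hsingle v hu s''
      exact hN M hM t u hen2 s'
    apply hnen
    intro s
    rw [Net.preMS, Finset.sum_multiset_map_count]
    by_cases hex : ∃ t₀ ∈ G.toFinset, 0 < N.pre t₀ s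
    · obtain ⟨t₀, ht₀, hpos⟩ := hex
      have : (∑ t ∈ G.toFinset, G.count t • N.pre t s) = G.count t₀ • N.pre t₀ s := by
        apply Finset.sum_eq_single_of_mem t₀ ht₀
        intro u hu hut
        have := hpair t₀ (Multiset.mem_toFinset.mp ht₀) u (Multiset.mem_toFinset.mp hu)
          (Ne.symm hut) s
        rcases this with h0 | h0
        · omega
        · simp [h0]
      rw [this]
      simpa [smul_eq_mul] using hrep t₀ (Multiset.mem_toFinset.mp ht₀) s
    · push_neg at hex
      have : (∑ t ∈ G.toFinset, G.count t • N.pre t s) = 0 := by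
        apply Finset.sum_eq_zero
        intro u hu
        have := hex u hu
        simp [Nat.le_zero.mp this]
      simp only [smul_eq_mul] at this ⊢
      rw [this]
      exact Nat.zero_le _
end

section
/- Let P be a GR-process of a net N compatible with a firing sequence σ, and let σ'' be a finite prefix of σ. Then there exists a finite GR-process P'' of N which is a prefix of P and compatible with σ''. -/
open Relation

/-- the data of a candidate GR-process: an occurrence net labelled over `N`,
with process places drawn from `PS` and process transitions from `PT`. -/
structure GRProcessData (S T PS PT : Type) where
  places : Set PS
  trans : Set PT
  /-- `preRel s t`: there is an arc from place `s` to transition `t` -/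
  preRel : PS → PT → Prop
  /-- `postRel t s`: there is an arc from transition `t` to place `s` -/
  postRel : PT → PS → Prop
  piS : PS → S
  piT : PT → T

namespace GRProcessData

variable {S T PS PT : Type}

/-- the flow relation of the occurrence net -/
def flow (P : GRProcessData S T PS PT) : (PS ⊕ PT) → (PS ⊕ PT) → Prop
  | Sum.inl s, Sum.inr t => P.preRel s t
  | Sum.inr t, Sum.inl s => P.postRel t s
  | _, _ => False

/-- the places with empty preset, carrying the initial marking -/
def initialPlaces (P : GRProcessData S T PS PT) : Set PS :=
  {s | s ∈ P.places ∧ ∀ t, ¬ P.postRel t s}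

/-- `P` is a GR-process of the net `N` -/
structure IsGRProcess (N : Net S T) (P : GRProcessData S T PS PT) : Prop where
  pre_support : ∀ s t, P.preRel s t → s ∈ P.places ∧ t ∈ P.trans
  post_support : ∀ t s, P.postRel t s → s ∈ P.places ∧ t ∈ P.trans
  place_pre_unique : ∀ s t t', P.postRel t s → P.postRel t' s → t = t'
  place_post_unique : ∀ s t t', P.preRel s t → P.preRel s t' → t = t'
  acyclic : ∀ x, ¬ Relation.TransGen P.flow x x
  fin_causes : ∀ u ∈ P.trans, {t : PT | Relation.TransGen P.flow (Sum.inr t) (Sum.inr u)}.Finite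
  init_marking : ∀ a : S, ({s | s ∈ P.initialPlaces ∧ P.piS s = a}).Finite ∧
    N.M0 a = Set.ncard {s | s ∈ P.initialPlaces ∧ P.piS s = a}
  pre_match : ∀ t ∈ P.trans, ∀ a : S, ({s | P.preRel s t ∧ P.piS s = a}).Finite ∧
    N.pre (P.piT t) a = Set.ncard {s | P.preRel s t ∧ P.piS s = a}
  post_match : ∀ t ∈ P.trans, ∀ a : S, ({s | P.postRel t s ∧ P.piS s = a}).Finite ∧
    N.post (P.piT t) a = Set.ncard {s | P.postRel t s ∧ P.piS s = a}

/-- `P''` is a prefix of `P'` -/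
def IsPrefixOf (P'' P' : GRProcessData S T PS PT) : Prop :=
  P''.places ⊆ P'.places ∧ P''.trans ⊆ P'.trans ∧
  (∀ s ∈ P''.places, ∀ t ∈ P''.trans,
    (P''.preRel s t ↔ P'.preRel s t) ∧ (P''.postRel t s ↔ P'.postRel t s)) ∧
  (∀ s ∈ P''.places, P''.piS s = P'.piS s) ∧
  (∀ t ∈ P''.trans, P''.piT t = P'.piT t) ∧
  P''.initialPlaces = P'.initialPlaces

/-- a process `P` is compatible with the (possibly infinite) transition
sequence `σ` via an order-respecting bijection `pos`. -/
def Compatible (P : GRProcessData S T PS PT) (σ : Stream'.Seq T) : Prop :=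
  ∃ pos : PT → ℕ,
    (∀ t ∈ P.trans, σ.get? (pos t) = some (P.piT t)) ∧
    (∀ t ∈ P.trans, ∀ u ∈ P.trans, pos t = pos u → t = u) ∧
    (∀ i, (σ.get? i).isSome → ∃ t ∈ P.trans, pos t = i) ∧
    (∀ t ∈ P.trans, ∀ u ∈ P.trans,
      Relation.TransGen P.flow (Sum.inr t) (Sum.inr u) → pos t < pos u)

end GRProcessData

/-!
Cut `P` at the first `|σ''|` positions of the compatibility bijection `pos`: keep the transitions
`t` with `pos t < |σ''|`, the initial places, and the output places of kept transitions. Since `pos`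
is monotone along the causal order, the kept transitions are causally closed, so every input place of
a kept transition is kept as well and the arc-counting conditions of a GR-process transfer verbatim.
-/

theorem ListPrefixSeq.getElem?_eq_ite {T : Type} {l : List T} {s : Stream'.Seq T}
    (hl : ListPrefixSeq l s) (i : ℕ) : l[i]? = if i < l.length then s.get? i else none := by
  rw [← Stream'.Seq.getElem?_take, hl]

namespace GRProcessData

variable {S T PS PT : Type}

def CompatibleVia (P : GRProcessData S T PS PT) (σ : Stream'.Seq T) (pos : PT → ℕ) : Prop :=
  (∀ t ∈ P.trans, σ.get? (pos t) = some (P.piT t)) ∧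
  (∀ t ∈ P.trans, ∀ u ∈ P.trans, pos t = pos u → t = u) ∧
  (∀ i, (σ.get? i).isSome → ∃ t ∈ P.trans, pos t = i) ∧
  (∀ t ∈ P.trans, ∀ u ∈ P.trans,
    Relation.TransGen P.flow (Sum.inr t) (Sum.inr u) → pos t < pos u)

theorem compatible_iff_exists_compatibleVia (P : GRProcessData S T PS PT) (σ : Stream'.Seq T) :
    P.Compatible σ ↔ ∃ pos, P.CompatibleVia σ pos :=
  Iff.rfl

def IsCausallyClosed (P : GRProcessData S T PS PT) (Tr : Set PT) : Prop :=
  ∀ u ∈ P.trans, ∀ t ∈ Tr, Relation.TransGen P.flow (Sum.inr u) (Sum.inr t) → u ∈ Tr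

def restrict (P : GRProcessData S T PS PT) (Tr : Set PT) : GRProcessData S T PS PT where
  places := {s ∈ P.places | (∀ t, ¬ P.postRel t s) ∨ ∃ t ∈ Tr, P.postRel t s}
  trans := Tr
  preRel s t := P.preRel s t ∧ t ∈ Tr
  postRel t s := P.postRel t s ∧ t ∈ Tr
  piS := P.piS
  piT := P.piT

section Restrict

variable (P : GRProcessData S T PS PT) (Tr : Set PT)

theorem flow_restrict_le : ∀ x y, (P.restrict Tr).flow x y → P.flow x y
  | .inl _, .inr _, h => h.1
  | .inr _, .inl _, h => h.1

theorem transGen_flow_restrict_le {x y : PS ⊕ PT} (h : Relation.TransGen (P.restrict Tr).flow x y) :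
    Relation.TransGen P.flow x y :=
  Relation.TransGen.mono (P.flow_restrict_le Tr) _ _ h

@[simp]
theorem initialPlaces_restrict : (P.restrict Tr).initialPlaces = P.initialPlaces := by
  ext s
  constructor
  · rintro ⟨⟨hs, h_init | ⟨u, hu, hus⟩⟩, hno⟩
    · exact ⟨hs, h_init⟩
    · exact absurd ⟨hus, hu⟩ (hno u)
  · rintro ⟨hs, hno⟩
    exact ⟨⟨hs, Or.inl hno⟩, fun t ht => hno t ht.1⟩

theorem restrict_isPrefixOf (hTr : Tr ⊆ P.trans) : (P.restrict Tr).IsPrefixOf P :=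
  ⟨fun _ hs => hs.1, hTr, fun _ _ _ ht => ⟨and_iff_left ht, and_iff_left ht⟩,
    fun _ _ => rfl, fun _ _ => rfl, P.initialPlaces_restrict Tr⟩

variable {N : Net S T} {P Tr}

theorem IsGRProcess.restrict (hP : IsGRProcess N P) (hTr : Tr ⊆ P.trans)
    (hclosed : P.IsCausallyClosed Tr) : IsGRProcess N (P.restrict Tr) := by
  -- an input place of a kept transition is initial or produced by a causal predecessor
  have pre_mem_places : ∀ s t, P.preRel s t → t ∈ Tr → s ∈ (P.restrict Tr).places := by
    intro s t hst ht
    refine ⟨(hP.pre_support s t hst).1, ?_⟩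
    rcases em (∃ u, P.postRel u s) with ⟨u, hus⟩ | h_init
    · have hut : Relation.TransGen P.flow (Sum.inr u) (Sum.inr t) :=
        .head (show P.flow (Sum.inr u) (Sum.inl s) from hus) (.single hst)
      exact Or.inr ⟨u, hclosed u (hP.post_support u s hus).2 t ht hut, hus⟩
    · exact Or.inl (not_exists.1 h_init)
  refine
    { pre_support := fun s t h => ⟨pre_mem_places s t h.1 h.2, h.2⟩
      post_support := fun t s h => ⟨⟨(hP.post_support t s h.1).1, Or.inr ⟨t, h.2, h.1⟩⟩, h.2⟩
      place_pre_unique := fun s t t' h h' => hP.place_pre_unique s t t' h.1 h'.1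
      place_post_unique := fun s t t' h h' => hP.place_post_unique s t t' h.1 h'.1
      acyclic := fun x hx => hP.acyclic x (transGen_flow_restrict_le P Tr hx)
      fin_causes := fun u hu =>
        (hP.fin_causes u (hTr hu)).subset fun _ => transGen_flow_restrict_le P Tr
      init_marking := fun a => by
        rw [initialPlaces_restrict]
        exact hP.init_marking a
      pre_match := fun t ht a => ?_
      post_match := fun t ht a => ?_ }
  · have ht' : t ∈ Tr := ht
    simpa only [GRProcessData.restrict, ht', and_true] using hP.pre_match t (hTr ht) a
  · have ht' : t ∈ Tr := ht
    simpa only [GRProcessData.restrict, ht', and_true] using hP.post_match t (hTr ht) a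

end Restrict

namespace CompatibleVia

variable {P : GRProcessData S T PS PT} {σ : Stream'.Seq T} {pos : PT → ℕ}

theorem isCausallyClosed (h : P.CompatibleVia σ pos) (n : ℕ) :
    P.IsCausallyClosed {t ∈ P.trans | pos t < n} :=
  fun u hu t ht hut => ⟨hu, (h.2.2.2 u hu t ht.1 hut).trans ht.2⟩

theorem finite_pos_lt (h : P.CompatibleVia σ pos) (n : ℕ) :
    {t ∈ P.trans | pos t < n}.Finite :=
  Set.Finite.of_finite_image ((Set.finite_Iio n).subset (Set.image_subset_iff.2 fun _ ht => ht.2))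
    fun t ht u hu => h.2.1 t ht.1 u hu.1

theorem restrict_of_listPrefixSeq (h : P.CompatibleVia σ pos) {l : List T}
    (hl : ListPrefixSeq l σ) :
    (P.restrict {t ∈ P.trans | pos t < l.length}).CompatibleVia (.ofList l) pos := by
  obtain ⟨hlabel, hinj, hsurj, hmono⟩ := h
  refine ⟨fun t ht => ?_, fun t ht u hu => hinj t ht.1 u hu.1, fun i hi => ?_,
    fun t ht u hu htu => hmono t ht.1 u hu.1 (transGen_flow_restrict_le P _ htu)⟩
  · rw [Stream'.Seq.ofList_get?, hl.getElem?_eq_ite, if_pos ht.2]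
    exact hlabel t ht.1
  · rw [Stream'.Seq.ofList_get?, hl.getElem?_eq_ite] at hi
    split_ifs at hi with hin
    · obtain ⟨t, ht, rfl⟩ := hsurj i hi
      exact ⟨t, ⟨ht, hin⟩, rfl⟩
    · simp at hi

end CompatibleVia

end GRProcessData

theorem prefix_down_fs_general {S T PS PT : Type} (N : Net S T)
    (P : GRProcessData S T PS PT) (hP : GRProcessData.IsGRProcess N P)
    (σ : Stream'.Seq T) (hcomp : P.Compatible σ)
    (σ'' : List T) (hpre : ListPrefixSeq σ'' σ) :
    ∃ P'' : GRProcessData S T PS PT,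
      GRProcessData.IsGRProcess N P'' ∧ P''.trans.Finite ∧
      P''.IsPrefixOf P ∧ P''.Compatible (Stream'.Seq.ofList σ'') := by
  obtain ⟨pos, hpos⟩ := (GRProcessData.compatible_iff_exists_compatibleVia P σ).1 hcomp
  have hsub : {t ∈ P.trans | pos t < σ''.length} ⊆ P.trans := fun _ ht => ht.1
  refine ⟨P.restrict {t ∈ P.trans | pos t < σ''.length},
    hP.restrict hsub (hpos.isCausallyClosed _), hpos.finite_pos_lt _,
    P.restrict_isPrefixOf _ hsub, pos, hpos.restrict_of_listPrefixSeq hpre⟩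

theorem prefix_down_fs {S T PS PT : Type} (N : Net S T)
    (P : GRProcessData S T PS PT) (hP : GRProcessData.IsGRProcess N P)
    (σ : Stream'.Seq T) (hσ : N.FSInf σ) (hcomp : P.Compatible σ)
    (σ'' : List T) (h'' : N.FS σ'') (hpre : ListPrefixSeq σ'' σ) :
    ∃ P'' : GRProcessData S T PS PT,
      GRProcessData.IsGRProcess N P'' ∧ P''.trans.Finite ∧
      P''.IsPrefixOf P ∧ P''.Compatible (Stream'.Seq.ofList σ'') :=
  prefix_down_fs_general N P hP σ hcomp σ'' hpre
end

section
/- Let P'' ≤ P' be finite GR-processes of a net N (P'' a prefix of P'), and let σ'' be a finite firing sequence compatible with P''. Then there exists a finite firing sequence σ₀ compatible with P' such that σ'' ≤ σ₀. -/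
open Relation

/-!
The causal past, in `P'`, of a transition of the prefix `P''` stays inside `P''`: places of `P''`
with a producer in `P'` are not initial, hence have a producer in `P''`, which is the same one
because places are unbranched. So `σ''` linearises a causally downward-closed part of `P'`, and
appending causally minimal remaining transitions one at a time extends it to a linearisation of
all of `P'`. Finally, every linearisation of a finite downward-closed set `G` of process
transitions fires from the initial marking to the marking of the cut of `G`: the last transition
`t` is maximal, its preset lies in the cut of `G \ {t}`, and firing it replaces that preset by
its postset.
-/

theorem Set.ncard_sdiff_union_of_subset {α : Type*} {A B C : Set α} (hBA : B ⊆ A)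
    (hAC : Disjoint A C) (hA : A.Finite) (hC : C.Finite) :
    (A \ B ∪ C).ncard = A.ncard - B.ncard + C.ncard := by
  rw [Set.ncard_union_eq (hAC.mono_left Set.sdiff_subset) hA.sdiff hC,
    Set.ncard_sdiff hBA (hA.subset hBA)]

theorem iff_of_ncard_fiber_eq {α β : Type*} {p q : α → Prop} {f g : α → β}
    (hpq : ∀ x, p x → q x ∧ f x = g x) (hfin : ∀ b, {x | q x ∧ g x = b}.Finite)
    (hcard : ∀ b, {x | q x ∧ g x = b}.ncard = {x | p x ∧ f x = b}.ncard) (x : α) :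
    p x ↔ q x := by
  refine ⟨fun hx => (hpq x hx).1, fun hx => ?_⟩
  have hsub : {y | p y ∧ f y = g x} ⊆ {y | q y ∧ g y = g x} := fun y ⟨hy, hfy⟩ =>
    ⟨(hpq y hy).1, (hpq y hy).2 ▸ hfy⟩
  have hfiber := Set.eq_of_subset_of_ncard_le hsub (hcard _).le (hfin _)
  have hx' : x ∈ {y | q y ∧ g y = g x} := ⟨hx, rfl⟩
  exact (hfiber ▸ hx').1

namespace Net

variable {S T : Type} {N : Net S T}

theorem FiresList.concat {M M₁ M₂ : S → ℕ} {σ : List T} {t : T} (h : N.FiresList M σ M₁)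
    (ht : N.Fires t M₁ M₂) : N.FiresList M (σ ++ [t]) M₂ := by
  induction h with
  | nil => exact .cons ht (.nil _)
  | cons hf _ ih => exact .cons hf (ih ht)

end Net

namespace GRProcessData

variable {S T PS PT : Type} {N : Net S T} {P : GRProcessData S T PS PT}

def Causes (P : GRProcessData S T PS PT) (u v : PT) : Prop :=
  TransGen P.flow (.inr u) (.inr v)

def nodes (P : GRProcessData S T PS PT) : Set (PS ⊕ PT) :=
  {x | Sum.elim (· ∈ P.places) (· ∈ P.trans) x}

def preset (P : GRProcessData S T PS PT) (t : PT) : Set PS := {s | P.preRel s t}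

def postset (P : GRProcessData S T PS PT) (t : PT) : Set PS := {s | P.postRel t s}

/-- The places marked once exactly the transitions of `G` have fired. -/
def cut (P : GRProcessData S T PS PT) (G : Set PT) : Set PS :=
  {s ∈ P.places | (∀ w, P.postRel w s → w ∈ G) ∧ ∀ v, P.preRel s v → v ∉ G}

noncomputable def marking (P : GRProcessData S T PS PT) (X : Set PS) (a : S) : ℕ :=
  (X ∩ P.piS ⁻¹' {a}).ncard

structure IsDownClosed (P : GRProcessData S T PS PT) (G : Set PT) : Prop where
  subset : G ⊆ P.trans
  mem_of_causes : ∀ ⦃u v⦄, P.Causes u v → v ∈ G → u ∈ G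

structure IsLinearization (P : GRProcessData S T PS PT) (G : Set PT) (σ : List T)
    (pos : PT → ℕ) : Prop where
  getElem?_pos : ∀ u ∈ G, σ[pos u]? = some (P.piT u)
  injOn : Set.InjOn pos G
  exists_pos_eq : ∀ i < σ.length, ∃ u ∈ G, pos u = i
  pos_lt_pos : ∀ u ∈ G, ∀ v ∈ G, P.Causes u v → pos u < pos v

theorem compatible_ofList_iff {σ : List T} :
    P.Compatible (Stream'.Seq.ofList σ) ↔ ∃ pos, P.IsLinearization P.trans σ pos := by
  simp only [Compatible, Stream'.Seq.ofList_get?, isSome_getElem?]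
  exact ⟨fun ⟨pos, h₁, h₂, h₃, h₄⟩ => ⟨pos, h₁, h₂, h₃, h₄⟩,
    fun ⟨pos, h₁, h₂, h₃, h₄⟩ => ⟨pos, h₁, h₂, h₃, h₄⟩⟩

theorem causes_of_postRel_of_preRel {w v : PT} {s : PS} (hw : P.postRel w s)
    (hv : P.preRel s v) : P.Causes w v :=
  .head (show P.flow (.inr w) (.inl s) from hw) (.single (show P.flow (.inl s) (.inr v) from hv))

theorem cut_empty : P.cut ∅ = P.initialPlaces := by
  ext s
  simp [cut, initialPlaces]

theorem disjoint_cut_postset {G : Set PT} {t : PT} (htG : t ∉ G) :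
    Disjoint (P.cut G) (P.postset t) :=
  Set.disjoint_left.2 fun _ hs hts => htG (hs.2.1 t hts)

theorem IsDownClosed.insert {G : Set PT} {t : PT} (hG : P.IsDownClosed G) (ht : t ∈ P.trans)
    (hbefore : ∀ u, P.Causes u t → u ∈ G) : P.IsDownClosed (insert t G) where
  subset := Set.insert_subset ht hG.subset
  mem_of_causes := by
    rintro u v huv (rfl | hv)
    · exact .inr (hbefore u huv)
    · exact .inr (hG.mem_of_causes huv hv)

namespace IsGRProcess

theorem causes_irrefl (hP : P.IsGRProcess N) (u : PT) : ¬ P.Causes u u :=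
  hP.acyclic _

theorem mem_trans_of_causes (hP : P.IsGRProcess N) {u v : PT} (h : P.Causes u v) :
    u ∈ P.trans := by
  obtain ⟨c, hc, -⟩ := TransGen.head'_iff.1 h
  cases c with
  | inl s => exact (hP.post_support u s hc).2
  | inr w => exact (hc : False).elim

theorem isDownClosed_trans (hP : P.IsGRProcess N) : P.IsDownClosed P.trans :=
  ⟨subset_rfl, fun _ _ h _ => hP.mem_trans_of_causes h⟩

theorem exists_causes_minimal (hP : P.IsGRProcess N) {R : Set PT} (hR : R.Finite)
    (hne : R.Nonempty) : ∃ t ∈ R, ∀ u ∈ R, ¬ P.Causes u t := by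
  have : IsStrictOrder PT P.Causes :=
    { irrefl := hP.causes_irrefl, trans := fun _ _ _ => TransGen.trans }
  obtain ⟨t, htR, hmin⟩ :=
    (Set.wellFoundedOn_iff.1 (hR.wellFoundedOn (r := P.Causes))).has_min R hne
  exact ⟨t, htR, fun u hu hut => hmin u hu ⟨hut, hu, htR⟩⟩

theorem marking_initialPlaces (hP : P.IsGRProcess N) : P.marking P.initialPlaces = N.M0 :=
  funext fun a => (hP.init_marking a).2.symm

theorem finite_cut_inter_fiber (hP : P.IsGRProcess N) {G : Set PT} (hG : G.Finite)
    (hGP : G ⊆ P.trans) (a : S) : (P.cut G ∩ P.piS ⁻¹' {a}).Finite := by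
  refine ((hP.init_marking a).1.union
    (hG.biUnion fun w hw => (hP.post_match w (hGP hw) a).1)).subset ?_
  rintro s ⟨⟨hs, hprod, -⟩, hsa⟩
  by_cases h : ∃ w, P.postRel w s
  · obtain ⟨w, hw⟩ := h
    exact .inr (Set.mem_biUnion (hprod w hw) ⟨hw, hsa⟩)
  · exact .inl ⟨⟨hs, not_exists.1 h⟩, hsa⟩

theorem preset_subset_cut (hP : P.IsGRProcess N) {G : Set PT} {t : PT} (htG : t ∉ G)
    (hbefore : ∀ u, P.Causes u t → u ∈ G) : P.preset t ⊆ P.cut G := fun s hs =>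
  ⟨(hP.pre_support s t hs).1, fun w hw => hbefore w (causes_of_postRel_of_preRel hw hs),
    fun v hv hvG => htG (hP.place_post_unique s v t hv hs ▸ hvG)⟩

theorem cut_insert (hP : P.IsGRProcess N) {G : Set PT} {t : PT}
    (hafter : ∀ v ∈ G, ¬ P.Causes t v) :
    P.cut (insert t G) = P.cut G \ P.preset t ∪ P.postset t := by
  ext s
  constructor
  · rintro ⟨hs, hprod, hcons⟩
    by_cases hts : P.postRel t s
    · exact .inr hts
    · refine .inl ⟨⟨hs, fun w hw => ?_, fun v hv hvG => hcons v hv (.inr hvG)⟩,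
        fun hst => hcons t hst (.inl rfl)⟩
      exact (hprod w hw).resolve_left (by rintro rfl; exact hts hw)
  · rintro (⟨⟨hs, hprod, hcons⟩, hst⟩ | hts)
    · refine ⟨hs, fun w hw => .inr (hprod w hw), ?_⟩
      rintro v hv (rfl | hvG)
      · exact hst hv
      · exact hcons v hv hvG
    · refine ⟨(hP.post_support t s hts).1, fun w hw => .inl (hP.place_pre_unique s w t hw hts),
        ?_⟩
      rintro v hv (rfl | hvG)
      · exact hP.causes_irrefl _ (causes_of_postRel_of_preRel hts hv)
      · exact hafter v hvG (causes_of_postRel_of_preRel hts hv)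

theorem fires_marking_cut_insert (hP : P.IsGRProcess N) {G : Set PT} {t : PT} (hG : G.Finite)
    (hGP : G ⊆ P.trans) (ht : t ∈ P.trans) (htG : t ∉ G)
    (hbefore : ∀ u, P.Causes u t → u ∈ G)
    (hafter : ∀ v ∈ G, ¬ P.Causes t v) :
    N.Fires (P.piT t) (P.marking (P.cut G)) (P.marking (P.cut (insert t G))) := by
  have hpre : ∀ a, N.pre (P.piT t) a = P.marking (P.preset t) a := fun a =>
    (hP.pre_match t ht a).2
  have hpost : ∀ a, N.post (P.piT t) a = P.marking (P.postset t) a := fun a =>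
    (hP.post_match t ht a).2
  have hsub : ∀ a, P.preset t ∩ P.piS ⁻¹' {a} ⊆ P.cut G ∩ P.piS ⁻¹' {a} := fun _ =>
    Set.inter_subset_inter_left _ (hP.preset_subset_cut htG hbefore)
  refine ⟨fun a => ?_, funext fun a => ?_⟩
  · rw [hpre]
    exact Set.ncard_le_ncard (hsub a) (hP.finite_cut_inter_fiber hG hGP a)
  · rw [hpre, hpost, hP.cut_insert hafter, marking, Set.union_inter_distrib_right,
      Set.inter_sdiff_distrib_right]
    exact Set.ncard_sdiff_union_of_subset (hsub a)
      ((disjoint_cut_postset htG).mono Set.inter_subset_left Set.inter_subset_left)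
      (hP.finite_cut_inter_fiber hG hGP a) (hP.post_match t ht a).1

end IsGRProcess

namespace IsLinearization

variable {G : Set PT} {σ : List T} {pos : PT → ℕ}

theorem pos_lt_length (hL : P.IsLinearization G σ pos) {u : PT} (hu : u ∈ G) :
    pos u < σ.length :=
  (List.getElem?_eq_some_iff.1 (hL.getElem?_pos u hu)).1

theorem finite (hL : P.IsLinearization G σ pos) : G.Finite :=
  Set.Finite.of_finite_image ((Set.finite_Iio σ.length).subset
    (Set.image_subset_iff.2 fun _ hu => hL.pos_lt_length hu)) hL.injOn

theorem eq_empty_of_nil (hL : P.IsLinearization G [] pos) : G = ∅ :=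
  Set.eq_empty_of_forall_notMem fun _ hu => by simpa using hL.pos_lt_length hu

theorem exists_last {b : T} (hL : P.IsLinearization G (σ ++ [b]) pos) :
    ∃ t ∈ G, pos t = σ.length ∧ b = P.piT t ∧ P.IsLinearization (G \ {t}) σ pos := by
  obtain ⟨t, htG, ht⟩ := hL.exists_pos_eq σ.length (by simp)
  have hlt : ∀ u ∈ G \ {t}, pos u < σ.length := fun u ⟨hu, hut⟩ => by
    have hne : pos u ≠ pos t := fun h => hut (hL.injOn hu htG h)
    have := hL.pos_lt_length hu
    simp only [List.length_append, List.length_singleton] at this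
    omega
  refine ⟨t, htG, ht, ?_, fun u hu => ?_, hL.injOn.mono Set.sdiff_subset, fun i hi => ?_,
    fun u hu v hv => hL.pos_lt_pos u hu.1 v hv.1⟩
  · have hb := hL.getElem?_pos t htG
    rw [ht, List.getElem?_concat_length] at hb
    exact Option.some_injective _ hb
  · rw [← List.getElem?_append_left (hlt u hu)]
    exact hL.getElem?_pos u hu.1
  · obtain ⟨u, hu, rfl⟩ := hL.exists_pos_eq i (by simp; omega)
    exact ⟨u, ⟨hu, by rintro rfl; omega⟩, rfl⟩

theorem exists_concat (hL : P.IsLinearization G σ pos) (hP : P.IsGRProcess N)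
    (hG : P.IsDownClosed G) {t : PT} (htG : t ∉ G) :
    ∃ pos', P.IsLinearization (insert t G) (σ ++ [P.piT t]) pos' := by
  classical
  set pos' := Function.update pos t σ.length
  have hpos' : ∀ u ∈ G, pos' u = pos u := fun u hu =>
    Function.update_of_ne (by rintro rfl; exact htG hu) _ _
  have hpos't : pos' t = σ.length := Function.update_self _ _ _
  refine ⟨pos', ?_, ?_, fun i hi => ?_, ?_⟩
  · rintro u (rfl | hu)
    · rw [hpos't, List.getElem?_concat_length]
    · rw [hpos' u hu, List.getElem?_append_left (hL.pos_lt_length hu)]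
      exact hL.getElem?_pos u hu
  · rintro u (rfl | hu) v (rfl | hv) h
    · rfl
    · exact absurd (hpos't ▸ hpos' v hv ▸ h) (hL.pos_lt_length hv).ne'
    · exact absurd (hpos't ▸ hpos' u hu ▸ h) (hL.pos_lt_length hu).ne
    · exact hL.injOn hu hv (hpos' u hu ▸ hpos' v hv ▸ h)
  · rcases (Nat.lt_succ_iff_lt_or_eq.1 (by simpa using hi)) with hi | rfl
    · obtain ⟨u, hu, rfl⟩ := hL.exists_pos_eq i hi
      exact ⟨u, .inr hu, hpos' u hu⟩
    · exact ⟨t, .inl rfl, hpos't⟩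
  · rintro u (rfl | hu) v (rfl | hv) huv
    · exact absurd huv (hP.causes_irrefl _)
    · exact absurd (hG.mem_of_causes huv hv) htG
    · rw [hpos' u hu, hpos't]
      exact hL.pos_lt_length hu
    · rw [hpos' u hu, hpos' v hv]
      exact hL.pos_lt_pos u hu v hv huv

theorem exists_extension (hL : P.IsLinearization G σ pos) (hP : P.IsGRProcess N)
    (hfin : P.trans.Finite) (hG : P.IsDownClosed G) :
    ∃ σ₀ pos₀, σ <+: σ₀ ∧ P.IsLinearization P.trans σ₀ pos₀ := by
  induction hn : (P.trans \ G).ncard generalizing G σ pos with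
  | zero =>
    have hGP : G = P.trans := hG.subset.antisymm
      (Set.sdiff_eq_empty.1 ((Set.ncard_eq_zero hfin.sdiff).1 hn))
    exact ⟨σ, pos, List.prefix_refl σ, hGP ▸ hL⟩
  | succ n ih =>
    have hne : (P.trans \ G).Nonempty := Set.nonempty_of_ncard_ne_zero (by omega)
    obtain ⟨t, ⟨htP, htG⟩, hmin⟩ := hP.exists_causes_minimal hfin.sdiff hne
    have hbefore : ∀ u, P.Causes u t → u ∈ G := fun u hut =>
      by_contra fun huG => hmin u ⟨hP.mem_trans_of_causes hut, huG⟩ hut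
    obtain ⟨pos', hL'⟩ := hL.exists_concat hP hG htG
    have hn' : (P.trans \ insert t G).ncard = n := by
      have htR : t ∈ P.trans \ G := ⟨htP, htG⟩
      rw [Set.insert_eq, Set.union_comm, ← Set.sdiff_sdiff, Set.ncard_sdiff_singleton_of_mem htR,
        hn, Nat.add_sub_cancel]
    obtain ⟨σ₀, pos₀, hσ₀, hL₀⟩ := ih hL' (hG.insert htP hbefore) hn'
    exact ⟨σ₀, pos₀, (List.prefix_append _ _).trans hσ₀, hL₀⟩

theorem firesList (hL : P.IsLinearization G σ pos) (hP : P.IsGRProcess N)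
    (hG : P.IsDownClosed G) : N.FiresList N.M0 σ (P.marking (P.cut G)) := by
  induction σ using List.reverseRecOn generalizing G with
  | nil =>
    rw [hL.eq_empty_of_nil, cut_empty, hP.marking_initialPlaces]
    exact .nil _
  | append_singleton σ b ih =>
    obtain ⟨t, htG, ht, rfl, hL'⟩ := hL.exists_last
    have hafter : ∀ v ∈ G \ {t}, ¬ P.Causes t v := fun v hv htv => by
      have := hL.pos_lt_pos t htG v hv.1 htv
      have := hL'.pos_lt_length hv
      omega
    have hG' : P.IsDownClosed (G \ {t}) :=
      ⟨Set.sdiff_subset.trans hG.subset, fun u v huv hv =>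
        ⟨hG.mem_of_causes huv hv.1, by rintro rfl; exact hafter v hv huv⟩⟩
    have hbefore : ∀ u, P.Causes u t → u ∈ G \ {t} := fun u hut =>
      ⟨hG.mem_of_causes hut htG, by rintro rfl; exact hP.causes_irrefl _ hut⟩
    have hGt : insert t (G \ {t}) = G := by
      rw [Set.insert_sdiff_singleton, Set.insert_eq_of_mem htG]
    rw [← hGt]
    exact (ih hL' hG').concat (hP.fires_marking_cut_insert hL'.finite hG'.subset
      (hG.subset htG) (by simp) hbefore hafter)

end IsLinearization

namespace IsPrefixOf

variable {P'' P' : GRProcessData S T PS PT}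

theorem preRel_iff (hP'' : P''.IsGRProcess N) (hP' : P'.IsGRProcess N)
    (hpre : P''.IsPrefixOf P') {u : PT} (hu : u ∈ P''.trans) (s : PS) :
    P''.preRel s u ↔ P'.preRel s u := by
  obtain ⟨-, htrans, hrel, hpiS, hpiT, -⟩ := hpre
  refine iff_of_ncard_fiber_eq (p := (P''.preRel · u)) (f := P''.piS) (fun x hx => ?_)
    (fun a => (hP'.pre_match u (htrans hu) a).1)
    (fun a => ?_) s
  · have hx' := (hP''.pre_support x u hx).1
    exact ⟨((hrel x hx' u hu).1).1 hx, hpiS x hx'⟩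
  · rw [← (hP'.pre_match u (htrans hu) a).2, ← (hP''.pre_match u hu a).2, hpiT u hu]

theorem postRel_iff (hP'' : P''.IsGRProcess N) (hP' : P'.IsGRProcess N)
    (hpre : P''.IsPrefixOf P') {u : PT} (hu : u ∈ P''.trans) (s : PS) :
    P''.postRel u s ↔ P'.postRel u s := by
  obtain ⟨-, htrans, hrel, hpiS, hpiT, -⟩ := hpre
  refine iff_of_ncard_fiber_eq (p := P''.postRel u) (f := P''.piS) (fun x hx => ?_)
    (fun a => (hP'.post_match u (htrans hu) a).1)
    (fun a => ?_) s
  · have hx' := (hP''.post_support u x hx).1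
    exact ⟨((hrel x hx' u hu).2).1 hx, hpiS x hx'⟩
  · rw [← (hP'.post_match u (htrans hu) a).2, ← (hP''.post_match u hu a).2, hpiT u hu]

theorem flow_of_flow (hP'' : P''.IsGRProcess N) (hP' : P'.IsGRProcess N)
    (hpre : P''.IsPrefixOf P') {x y : PS ⊕ PT} (h : P'.flow x y) (hy : y ∈ P''.nodes) :
    x ∈ P''.nodes ∧ P''.flow x y := by
  match x, y with
  | .inl s, .inr v =>
    have h'' : P''.preRel s v := (hpre.preRel_iff hP'' hP' hy s).2 h
    exact ⟨(hP''.pre_support s v h'').1, h''⟩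
  | .inr w, .inl s =>
    -- `s` has a producer in `P'`, so it is not initial in `P'`, nor in `P''`
    obtain ⟨w', hw'⟩ : ∃ w', P''.postRel w' s := by
      by_contra hno
      have hinit : s ∈ P'.initialPlaces := hpre.2.2.2.2.2 ▸ ⟨hy, not_exists.1 hno⟩
      exact hinit.2 w h
    have hw'P := (hP''.post_support w' s hw').2
    obtain rfl := hP'.place_pre_unique s w w' h ((hpre.postRel_iff hP'' hP' hw'P s).1 hw')
    exact ⟨hw'P, hw'⟩
  | .inl _, .inl _ => exact (h : False).elim
  | .inr _, .inr _ => exact (h : False).elim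

theorem causes_of_causes (hP'' : P''.IsGRProcess N) (hP' : P'.IsGRProcess N)
    (hpre : P''.IsPrefixOf P') {u v : PT} (h : P'.Causes u v) (hv : v ∈ P''.trans) :
    u ∈ P''.trans ∧ P''.Causes u v := by
  suffices ∀ y, TransGen P'.flow (.inr u) y → y ∈ P''.nodes →
      Sum.inr u ∈ P''.nodes ∧ TransGen P''.flow (.inr u) y from this _ h hv
  intro y hy
  induction hy with
  | single hxy => exact fun hy => (hpre.flow_of_flow hP'' hP' hxy hy).imp_right .single
  | tail _ hby ih =>
    intro hy
    obtain ⟨hb, hb'⟩ := hpre.flow_of_flow hP'' hP' hby hy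
    exact (ih hb).imp_right (·.tail hb')

theorem isDownClosed (hP'' : P''.IsGRProcess N) (hP' : P'.IsGRProcess N)
    (hpre : P''.IsPrefixOf P') : P'.IsDownClosed P''.trans :=
  ⟨hpre.2.1, fun _ _ h hv => (hpre.causes_of_causes hP'' hP' h hv).1⟩

theorem isLinearization (hP'' : P''.IsGRProcess N) (hP' : P'.IsGRProcess N)
    (hpre : P''.IsPrefixOf P') {σ : List T} {pos : PT → ℕ}
    (hL : P''.IsLinearization P''.trans σ pos) : P'.IsLinearization P''.trans σ pos :=
  ⟨fun u hu => hpre.2.2.2.2.1 u hu ▸ hL.getElem?_pos u hu, hL.injOn, hL.exists_pos_eq,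
    fun u hu v hv h => hL.pos_lt_pos u hu v hv (hpre.causes_of_causes hP'' hP' h hv).2⟩

end IsPrefixOf

end GRProcessData

open GRProcessData in
theorem prefix_up_GR_general {S T PS PT : Type} (N : Net S T)
    (P'' P' : GRProcessData S T PS PT)
    (hP'' : GRProcessData.IsGRProcess N P'')
    (hP' : GRProcessData.IsGRProcess N P')
    (hfin' : P'.trans.Finite)
    (hpre : P''.IsPrefixOf P')
    (σ'' : List T)
    (hcomp : P''.Compatible (Stream'.Seq.ofList σ'')) :
    ∃ σ₀ : List T, N.FS σ₀ ∧ σ'' <+: σ₀ ∧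
      P'.Compatible (Stream'.Seq.ofList σ₀) := by
  obtain ⟨pos, hL''⟩ := compatible_ofList_iff.1 hcomp
  have hL' := hpre.isLinearization hP'' hP' hL''
  obtain ⟨σ₀, pos₀, hprefix, hL₀⟩ :=
    hL'.exists_extension hP' hfin' (hpre.isDownClosed hP'' hP')
  exact ⟨σ₀, ⟨_, hL₀.firesList hP' hP'.isDownClosed_trans⟩, hprefix,
    compatible_ofList_iff.2 ⟨pos₀, hL₀⟩⟩

theorem prefix_up_GR {S T PS PT : Type} (N : Net S T)
    (P'' P' : GRProcessData S T PS PT)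
    (hP'' : GRProcessData.IsGRProcess N P'')
    (hP' : GRProcessData.IsGRProcess N P')
    (hfin'' : P''.trans.Finite) (hfin' : P'.trans.Finite)
    (hpre : P''.IsPrefixOf P')
    (σ'' : List T) (h'' : N.FS σ'')
    (hcomp : P''.Compatible (Stream'.Seq.ofList σ'')) :
    ∃ σ₀ : List T, N.FS σ₀ ∧ σ'' <+: σ₀ ∧
      P'.Compatible (Stream'.Seq.ofList σ₀) :=
  prefix_up_GR_general N P'' P' hP'' hP' hfin' hpre σ'' hcomp
end

section
/- For possibly infinite firing sequences σ, ρ of a net: σ ≡₀^∞ ρ (i.e., for every n there exist firing sequences σ', ρ' with σ ≡₀* σ' agreeing with ρ on a prefix of length n, and ρ ≡₀* ρ' agreeing with σ on a prefix of length n, where agreement also requires equal length when shorter than n) holds if and only if both: every finite prefix of ρ is a prefix of some firing sequence ≡₀*-equivalent to σ, and every finite prefix of σ is a prefix of some firing sequence ≡₀*-equivalent to ρ. -/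
open Relation

/-- the sequence `σ` has length at least `n` -/
def SeqLenGe {T : Type} (σ : Stream'.Seq T) (n : ℕ) : Prop :=
  ∀ i < n, (σ.get? i).isSome

/-- `σ ₙ= ρ`: the sequences are equal, or both have the same length (at
least `n`) and agree on their prefixes of length `n` -/
def NEq {T : Type} (n : ℕ) (σ ρ : Stream'.Seq T) : Prop :=
  σ = ρ ∨ (SeqLenGe σ n ∧ (∀ i, (σ.get? i).isSome ↔ (ρ.get? i).isSome) ∧
    σ.take n = ρ.take n)

/-!
Exchanging two adjacent transitions does not change which positions of a sequence are
defined, so `≡₀*`-equivalent sequences have the same length. The two prefix conditions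
therefore force `σ` and `ρ` to have the same length: a defined position `i` of `ρ` lies in
the prefix `ρ.take (i + 1)`, which is realised in the class of `σ`. Once the
lengths agree, a sequence in the class of `σ` starting with `ρ.take n` has the length of `ρ`,
and two sequences of equal length with equal `n`-prefixes satisfy `ₙ=`: if they are shorter
than `n`, they are equal.
-/

namespace Stream'.Seq

variable {α : Type*}

theorem get?_ofList_append (l : List α) (s : Seq α) (i : ℕ) :
    ((ofList l).append s).get? i = if i < l.length then l[i]? else s.get? (i - l.length) := by
  induction l generalizing i with
  | nil => simp [ofList_nil, nil_append]
  | cons a l ih =>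
    cases i with
    | zero => simp [ofList_cons, cons_append]
    | succ i => simp [ofList_cons, cons_append, ih]

theorem lt_length_take_iff {s : Seq α} {n i : ℕ} :
    i < (s.take n).length ↔ i < n ∧ (s.get? i).isSome := by
  rw [← isSome_getElem? (s.take n) i, getElem?_take]
  split_ifs <;> simp_all

theorem take_length_take (s : Seq α) (n : ℕ) : s.take (s.take n).length = s.take n := by
  refine List.ext_getElem? fun i => ?_
  have hi := lt_length_take_iff (s := s) (n := n) (i := i)
  by_cases hlt : i < (s.take n).length
  · rw [getElem?_take, getElem?_take, if_pos hlt, if_pos (hi.1 hlt).1]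
  · simp only [getElem?_take, if_neg hlt]
    split_ifs with hn
    · exact (Option.not_isSome_iff_eq_none.mp fun hs => hlt (hi.2 ⟨hn, hs⟩)).symm
    · rfl

theorem length_take_congr {s t : Seq α} (h : ∀ i, (s.get? i).isSome ↔ (t.get? i).isSome)
    (n : ℕ) : (s.take n).length = (t.take n).length :=
  eq_of_forall_lt_iff fun i => by rw [lt_length_take_iff, lt_length_take_iff, h]

end Stream'.Seq

open Stream'.Seq

theorem listPrefixSeq_take {T : Type} (s : Stream'.Seq T) (n : ℕ) :
    ListPrefixSeq (s.take n) s :=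
  take_length_take s n

theorem ListPrefixSeq.take_eq {T : Type} {s t : Stream'.Seq T} {n : ℕ}
    (h : ListPrefixSeq (t.take n) s) (hst : ∀ i, (s.get? i).isSome ↔ (t.get? i).isSome) :
    s.take n = t.take n := by
  rw [← take_length_take s n, length_take_congr hst]
  exact h

theorem NEq.take_eq {T : Type} {n : ℕ} {s t : Stream'.Seq T} (h : NEq n s t) :
    s.take n = t.take n := by
  rcases h with rfl | ⟨-, -, h⟩
  · rfl
  · exact h

theorem nEq_of_take_eq {T : Type} {n : ℕ} {s t : Stream'.Seq T}
    (hst : ∀ i, (s.get? i).isSome ↔ (t.get? i).isSome) (h : s.take n = t.take n) :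
    NEq n s t := by
  by_cases hlen : SeqLenGe s n
  · exact Or.inr ⟨hlen, hst, h⟩
  left
  obtain ⟨k, hkn, hk⟩ : ∃ k < n, ¬(s.get? k).isSome := by simpa [SeqLenGe] using hlen
  have hsk : s.get? k = none := Option.not_isSome_iff_eq_none.mp hk
  have htk : t.get? k = none := Option.not_isSome_iff_eq_none.mp ((hst k).not.mp hk)
  refine Stream'.Seq.ext fun i => ?_
  by_cases hin : i < n
  · simpa [hin] using congrArg (·[i]?) h
  · exact (s.le_stable (by omega) hsk).trans (t.le_stable (by omega) htk).symm

namespace Net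

variable {S T : Type} {N : Net S T}

instance : Std.Symm N.AdjSeq where
  symm _ _ := fun ⟨α, β, t, u, M, hσ, hρ, hα, htu, hfσ, hfρ⟩ =>
    ⟨α, β, u, t, M, hρ, hσ, hα, fun s => (Nat.add_comm _ _).trans_le (htu s), hfρ, hfσ⟩

theorem AdjSeq.isSome_get?_iff {σ ρ : Stream'.Seq T} (h : N.AdjSeq σ ρ) (i : ℕ) :
    (σ.get? i).isSome ↔ (ρ.get? i).isSome := by
  obtain ⟨α, β, t, u, M, rfl, rfl, -⟩ := h
  simp only [get?_ofList_append, List.length_append, List.length_cons, List.length_nil]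
  split_ifs with hi
  · simp [hi]
  · rfl

theorem isSome_get?_iff_of_reflTransGen {σ ρ : Stream'.Seq T}
    (h : ReflTransGen N.AdjSeq σ ρ) (i : ℕ) : (σ.get? i).isSome ↔ (ρ.get? i).isSome := by
  induction h with
  | refl => rfl
  | tail _ hstep ih => exact ih.trans (hstep.isSome_get?_iff i)

variable (N) in
def PrefixesInClassOf (ρ σ : Stream'.Seq T) : Prop :=
  ∀ ρ'' : List T, N.FS ρ'' → ListPrefixSeq ρ'' ρ →
    ∃ σ' : Stream'.Seq T, N.FSInf σ' ∧ ListPrefixSeq ρ'' σ' ∧ ReflTransGen N.AdjSeq σ' σ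

theorem prefixesInClassOf_of_forall_take_eq {σ ρ : Stream'.Seq T}
    (h : ∀ n, ∃ σ', N.FSInf σ' ∧ σ'.take n = ρ.take n ∧ ReflTransGen N.AdjSeq σ' σ) :
    N.PrefixesInClassOf ρ σ := fun ρ'' _ hρ'' =>
  let ⟨σ', hσ', htake, hσ'σ⟩ := h ρ''.length
  ⟨σ', hσ', htake.trans hρ'', hσ'σ⟩

theorem PrefixesInClassOf.isSome_get? {σ ρ : Stream'.Seq T} (h : N.PrefixesInClassOf ρ σ)
    (hρ : N.FSInf ρ) {i : ℕ} (hi : (ρ.get? i).isSome) : (σ.get? i).isSome := by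
  obtain ⟨σ', -, hσ', hσ'σ⟩ := h _ (hρ (i + 1)) (listPrefixSeq_take ρ (i + 1))
  have hlt : i < (ρ.take (i + 1)).length := lt_length_take_iff.2 ⟨i.lt_succ_self, hi⟩
  rw [← hσ'] at hlt
  exact (isSome_get?_iff_of_reflTransGen hσ'σ i).1 (lt_length_take_iff.1 hlt).2

theorem PrefixesInClassOf.exists_take_eq {σ ρ : Stream'.Seq T} (h : N.PrefixesInClassOf ρ σ)
    (hρ : N.FSInf ρ) (hσρ : ∀ i, (σ.get? i).isSome ↔ (ρ.get? i).isSome) (n : ℕ) :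
    ∃ σ', N.FSInf σ' ∧ σ'.take n = ρ.take n ∧ ReflTransGen N.AdjSeq σ' σ ∧
      ∀ i, (σ'.get? i).isSome ↔ (ρ.get? i).isSome := by
  obtain ⟨σ', hσ', hpre, hσ'σ⟩ := h _ (hρ n) (listPrefixSeq_take ρ n)
  have hσ'ρ i := (isSome_get?_iff_of_reflTransGen hσ'σ i).trans (hσρ i)
  exact ⟨σ', hσ', hpre.take_eq hσ'ρ, hσ'σ, hσ'ρ⟩

end Net

theorem equiv0inf_characterisation {S T : Type} (N : Net S T)
    (σ ρ : Stream'.Seq T) (hσ : N.FSInf σ) (hρ : N.FSInf ρ) :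
    (∀ n : ℕ, ∃ σ' ρ' : Stream'.Seq T, N.FSInf σ' ∧ N.FSInf ρ' ∧
      Relation.ReflTransGen N.AdjSeq σ σ' ∧ NEq n σ' ρ ∧
      NEq n σ ρ' ∧ Relation.ReflTransGen N.AdjSeq ρ' ρ) ↔
    ((∀ ρ'' : List T, N.FS ρ'' → ListPrefixSeq ρ'' ρ →
        ∃ σ' : Stream'.Seq T, N.FSInf σ' ∧ ListPrefixSeq ρ'' σ' ∧
          Relation.ReflTransGen N.AdjSeq σ' σ) ∧
     (∀ σ'' : List T, N.FS σ'' → ListPrefixSeq σ'' σ →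
        ∃ ρ' : Stream'.Seq T, N.FSInf ρ' ∧ ListPrefixSeq σ'' ρ' ∧
          Relation.ReflTransGen N.AdjSeq ρ' ρ)) := by
  constructor
  · intro h
    refine ⟨Net.prefixesInClassOf_of_forall_take_eq fun n => ?_,
      Net.prefixesInClassOf_of_forall_take_eq fun n => ?_⟩
    · obtain ⟨σ', -, hσ', -, hσσ', hσ'ρ, -⟩ := h n
      exact ⟨σ', hσ', hσ'ρ.take_eq, symm hσσ'⟩
    · obtain ⟨-, ρ', -, hρ', -, -, hσρ', hρ'ρ⟩ := h n
      exact ⟨ρ', hρ', hσρ'.take_eq.symm, hρ'ρ⟩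
  · rintro ⟨hρσ : N.PrefixesInClassOf ρ σ, hσρ : N.PrefixesInClassOf σ ρ⟩ n
    have hdom i : (σ.get? i).isSome ↔ (ρ.get? i).isSome :=
      ⟨hσρ.isSome_get? hσ, hρσ.isSome_get? hρ⟩
    obtain ⟨σ', hσ', hσ'ρ, hσ'σ, hdomσ'⟩ := hρσ.exists_take_eq hρ hdom n
    obtain ⟨ρ', hρ', hρ'σ, hρ'ρ, hdomρ'⟩ := hσρ.exists_take_eq hσ (fun i => (hdom i).symm) n
    exact ⟨σ', ρ', hσ', hρ', symm hσ'σ, nEq_of_take_eq hdomσ' hσ'ρ,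
      nEq_of_take_eq (fun i => (hdomρ' i).symm) hρ'σ.symm, hρ'ρ⟩
end
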